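/- arXiv:2510.26338 — 2 statements merged into one kernel-verified Lean document; each statement's English description precedes it below -/
import Mathlib

section
/- Let λ be a partition of N with length ℓ, and let k_i = λ_i − i + ℓ for i = 1, …, ℓ (a strictly decreasing sequence of nonnegative integers). Then the product of hooklengths of λ satisfies ∏_{(i,j)∈Y_λ} hk_λ(i,j) = (∏_{i=1}^ℓ k_i!) / ∏_{1≤i<j≤ℓ} (k_i − k_j). -/
/-!
Write k_m = λ_m + ℓ - m for the β-numbers of λ and c_j = j - 1 + ℓ - λ'_j for j ≥ 1. The
hooklength of the cell (i, j) is k_i - c_j. No c_j equals any k_m, so for fixed i the c_j with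
j ≤ λ_i and the k_m with m > i are λ_i + (ℓ - i) = k_i distinct numbers below k_i, that is, all
of {0, …, k_i - 1}. Hence the hooklengths of row i times ∏_{m > i} (k_i - k_m) is
∏_{t < k_i} (k_i - t) = k_i!, and the formula is the product of these identities over the rows.
-/

open Finset

namespace HookLength

def conj (ℓ : ℕ) (lam : ℕ → ℕ) (j : ℕ) : ℕ := #{i ∈ Icc 1 ℓ | j ≤ lam i}

def betaNum (ℓ : ℕ) (lam : ℕ → ℕ) (m : ℕ) : ℕ := lam m + ℓ - m

def coBetaNum (ℓ : ℕ) (lam : ℕ → ℕ) (j : ℕ) : ℕ := j - 1 + (ℓ - conj ℓ lam j)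

variable {ℓ : ℕ} {lam : ℕ → ℕ}

lemma conj_le (j : ℕ) : conj ℓ lam j ≤ ℓ := by
  simpa [conj] using card_filter_le (Icc 1 ℓ) (fun i => j ≤ lam i)

lemma conj_antitone : Antitone (conj ℓ lam) := fun _ _ h =>
  card_le_card fun _ hx => by
    rw [mem_filter] at hx ⊢
    exact ⟨hx.1, h.trans hx.2⟩

lemma le_conj_iff (hmono : AntitoneOn lam (Set.Icc 1 ℓ)) {j m : ℕ} (hm : m ∈ Icc 1 ℓ) :
    m ≤ conj ℓ lam j ↔ j ≤ lam m := by
  rw [mem_Icc] at hm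
  constructor
  · intro h
    by_contra! hlt
    have hsub : {i ∈ Icc 1 ℓ | j ≤ lam i} ⊆ Icc 1 (m - 1) := by
      intro x hx
      rw [mem_filter, mem_Icc] at hx
      have hxm : x < m := lt_of_not_ge fun hmx => (hx.2.trans (hmono hm hx.1 hmx)).not_gt hlt
      exact mem_Icc.2 ⟨hx.1.1, by omega⟩
    have := card_le_card hsub
    simp only [conj, Nat.card_Icc] at h this
    omega
  · intro h
    have hsub : Icc 1 m ⊆ {i ∈ Icc 1 ℓ | j ≤ lam i} := by
      intro x hx
      rw [mem_Icc] at hx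
      have hxℓ : x ∈ Set.Icc 1 ℓ := ⟨hx.1, hx.2.trans hm.2⟩
      exact mem_filter.2 ⟨mem_Icc.2 hxℓ, h.trans (hmono hxℓ hm hx.2)⟩
    simpa [conj] using card_le_card hsub

lemma betaNum_strictAntiOn (hmono : AntitoneOn lam (Set.Icc 1 ℓ)) :
    StrictAntiOn (betaNum ℓ lam) (Set.Icc 1 ℓ) := by
  intro a ha b hb hab
  have := hmono ha hb hab.le
  simp only [betaNum, Set.mem_Icc] at *
  omega

lemma coBetaNum_strictMonoOn : StrictMonoOn (coBetaNum ℓ lam) (Set.Ici 1) := by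
  intro a ha b _ hab
  have := conj_antitone (ℓ := ℓ) (lam := lam) hab.le
  have := conj_le (ℓ := ℓ) (lam := lam) a
  simp only [coBetaNum, Set.mem_Ici] at *
  omega

lemma coBetaNum_ne_betaNum (hmono : AntitoneOn lam (Set.Icc 1 ℓ)) {j m : ℕ} (hj : 1 ≤ j)
    (hm : m ∈ Icc 1 ℓ) : coBetaNum ℓ lam j ≠ betaNum ℓ lam m := by
  have hiff := le_conj_iff hmono (j := j) hm
  have := conj_le (ℓ := ℓ) (lam := lam) j
  rw [mem_Icc] at hm
  unfold coBetaNum betaNum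
  by_cases h : j ≤ lam m
  · have := hiff.2 h
    omega
  · have := mt hiff.1 h
    omega

lemma hook_eq_betaNum_sub_coBetaNum (hmono : AntitoneOn lam (Set.Icc 1 ℓ)) {i j : ℕ}
    (hi : i ∈ Icc 1 ℓ) (hj : j ∈ Icc 1 (lam i)) :
    lam i - j + (conj ℓ lam j - i) + 1 = betaNum ℓ lam i - coBetaNum ℓ lam j := by
  have := (le_conj_iff hmono hi).2 (mem_Icc.1 hj).2
  have := conj_le (ℓ := ℓ) (lam := lam) j
  rw [mem_Icc] at hi hj
  unfold betaNum coBetaNum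
  omega

lemma coBetaNum_lt_betaNum (hmono : AntitoneOn lam (Set.Icc 1 ℓ)) {i j : ℕ}
    (hi : i ∈ Icc 1 ℓ) (hj : j ∈ Icc 1 (lam i)) : coBetaNum ℓ lam j < betaNum ℓ lam i :=
  Nat.lt_of_sub_pos (hook_eq_betaNum_sub_coBetaNum hmono hi hj ▸ Nat.succ_pos _)

lemma coBetaNum_injOn (n : ℕ) : Set.InjOn (coBetaNum ℓ lam) (Icc 1 n) :=
  coBetaNum_strictMonoOn.injOn.mono fun _ hj => (mem_Icc.1 hj).1

lemma betaNum_injOn (hmono : AntitoneOn lam (Set.Icc 1 ℓ)) {i : ℕ} (hi : 1 ≤ i) :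
    Set.InjOn (betaNum ℓ lam) (Icc i ℓ) :=
  (betaNum_strictAntiOn hmono).injOn.mono fun _ hm => by
    rw [mem_coe, mem_Icc] at hm
    exact ⟨by omega, hm.2⟩

lemma betaNum_lt_betaNum (hmono : AntitoneOn lam (Set.Icc 1 ℓ)) {i m : ℕ} (hi : 1 ≤ i)
    (him : i < m) (hm : m ≤ ℓ) : betaNum ℓ lam m < betaNum ℓ lam i :=
  betaNum_strictAntiOn hmono ⟨hi, him.le.trans hm⟩ ⟨hi.trans him.le, hm⟩ him

lemma disjoint_image_coBetaNum_image_betaNum (hmono : AntitoneOn lam (Set.Icc 1 ℓ)) (n k : ℕ) :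
    Disjoint ((Icc 1 n).image (coBetaNum ℓ lam)) ((Icc (k + 1) ℓ).image (betaNum ℓ lam)) := by
  simp only [disjoint_left, mem_image, not_exists, not_and]
  rintro _ ⟨j, hj, rfl⟩ m hm
  rw [mem_Icc] at hj hm
  exact (coBetaNum_ne_betaNum hmono hj.1 (mem_Icc.2 ⟨by omega, hm.2⟩)).symm

lemma image_coBetaNum_union_image_betaNum (hmono : AntitoneOn lam (Set.Icc 1 ℓ)) {i : ℕ}
    (hi : i ∈ Icc 1 ℓ) :
    (Icc 1 (lam i)).image (coBetaNum ℓ lam) ∪ (Icc (i + 1) ℓ).image (betaNum ℓ lam)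
      = range (betaNum ℓ lam i) := by
  rw [mem_Icc] at hi
  refine eq_of_subset_of_card_le ?_ ?_
  · intro x hx
    simp only [mem_union, mem_image, mem_range] at hx ⊢
    rcases hx with ⟨j, hj, rfl⟩ | ⟨m, hm, rfl⟩
    · exact coBetaNum_lt_betaNum hmono (mem_Icc.2 hi) hj
    · rw [mem_Icc] at hm
      exact betaNum_lt_betaNum hmono hi.1 hm.1 hm.2
  · rw [card_union_of_disjoint (disjoint_image_coBetaNum_image_betaNum hmono _ _),
      card_image_of_injOn (coBetaNum_injOn _), card_image_of_injOn (betaNum_injOn hmono (by omega)),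
      card_range, Nat.card_Icc, Nat.card_Icc, betaNum]
    omega

lemma prod_hook_row_mul_prod_betaNum_sub (hmono : AntitoneOn lam (Set.Icc 1 ℓ)) {i : ℕ}
    (hi : i ∈ Icc 1 ℓ) :
    (∏ j ∈ Icc 1 (lam i), (lam i - j + (conj ℓ lam j - i) + 1)) *
        ∏ m ∈ Icc (i + 1) ℓ, (betaNum ℓ lam i - betaNum ℓ lam m) =
      (betaNum ℓ lam i).factorial := by
  rw [prod_congr rfl fun j hj => hook_eq_betaNum_sub_coBetaNum hmono hi hj,
    ← prod_image (g := coBetaNum ℓ lam) (coBetaNum_injOn _),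
    ← prod_image (g := betaNum ℓ lam) (betaNum_injOn hmono (by omega)),
    ← prod_union (disjoint_image_coBetaNum_image_betaNum hmono _ _),
    image_coBetaNum_union_image_betaNum hmono hi,
    ← Nat.descFactorial_eq_prod_range, Nat.descFactorial_self]

lemma prod_filter_lt_product_Icc {M : Type*} [CommMonoid M] (n : ℕ) (f : ℕ × ℕ → M) :
    ∏ p ∈ (Icc 1 n ×ˢ Icc 1 n).filter (fun p => p.1 < p.2), f p =
      ∏ i ∈ Icc 1 n, ∏ m ∈ Icc (i + 1) n, f (i, m) := by
  rw [prod_filter, prod_product]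
  refine prod_congr rfl fun i _ => ?_
  rw [← prod_filter]
  congr 1
  ext m
  simp only [mem_filter, mem_Icc]
  omega

end HookLength

open HookLength in
theorem hooklength_product_formula_general (ℓ : ℕ) (lam : ℕ → ℕ)
    (hmono : ∀ i j, 1 ≤ i → i ≤ j → lam j ≤ lam i) :
    ((∏ i ∈ Icc 1 ℓ, ∏ j ∈ Icc 1 (lam i),
        ((lam i - j) + (((Icc 1 ℓ).filter (fun i' => j ≤ lam i')).card - i) + 1) : ℕ) : ℤ)
      * ∏ p ∈ ((Icc 1 ℓ ×ˢ Icc 1 ℓ).filter (fun p => p.1 < p.2)),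
          (((lam p.1 + ℓ - p.1 : ℕ) : ℤ) - ((lam p.2 + ℓ - p.2 : ℕ) : ℤ))
    = ∏ i ∈ Icc 1 ℓ, ((lam i + ℓ - i).factorial : ℤ) := by
  have hanti : AntitoneOn lam (Set.Icc 1 ℓ) := fun a ha _ _ hab => hmono a _ ha.1 hab
  rw [prod_filter_lt_product_Icc, Nat.cast_prod, ← prod_mul_distrib]
  refine prod_congr rfl fun i hi => ?_
  have hcast : ∀ m ∈ Icc (i + 1) ℓ, ((betaNum ℓ lam i - betaNum ℓ lam m : ℕ) : ℤ) =
      (betaNum ℓ lam i : ℤ) - betaNum ℓ lam m := fun m hm =>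
    Nat.cast_sub (betaNum_lt_betaNum hanti (mem_Icc.1 hi).1 (mem_Icc.1 hm).1 (mem_Icc.1 hm).2).le
  have hrow := congrArg (Nat.cast : ℕ → ℤ) (prod_hook_row_mul_prod_betaNum_sub hanti hi)
  rw [Nat.cast_mul, Nat.cast_prod (s := Icc (i + 1) ℓ), prod_congr rfl hcast] at hrow
  exact hrow

/-- Hooklength product formula: for a partition λ of length ℓ with
k_i = λ_i − i + ℓ, the product of the hooklengths of λ times
∏_{i<j} (k_i − k_j) equals ∏_i k_i!. Here the conjugate partition value
λ'_j is the number of indices 1 ≤ i ≤ ℓ with λ_i ≥ j, and the hooklength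
of cell (i,j) is (λ_i − j) + (λ'_j − i) + 1. -/
theorem hooklength_product_formula (ℓ : ℕ) (lam : ℕ → ℕ)
    (hpos : ∀ i, 1 ≤ i → i ≤ ℓ → 0 < lam i)
    (hzero : ∀ i, ℓ < i → lam i = 0)
    (hmono : ∀ i j, 1 ≤ i → i ≤ j → lam j ≤ lam i) :
    ((∏ i ∈ Icc 1 ℓ, ∏ j ∈ Icc 1 (lam i),
        ((lam i - j) + (((Icc 1 ℓ).filter (fun i' => j ≤ lam i')).card - i) + 1) : ℕ) : ℤ)
      * ∏ p ∈ ((Icc 1 ℓ ×ˢ Icc 1 ℓ).filter (fun p => p.1 < p.2)),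
          (((lam p.1 + ℓ - p.1 : ℕ) : ℤ) - ((lam p.2 + ℓ - p.2 : ℕ) : ℤ))
    = ∏ i ∈ Icc 1 ℓ, ((lam i + ℓ - i).factorial : ℤ) :=
  hooklength_product_formula_general ℓ lam hmono
end

section
/- For a Maya diagram M and q ∈ ℕ, the following are equivalent: (i) M ⊆ M + q; (ii) there is no pair (m, k) with m ∈ M, k ∉ M, and m − k = q. Moreover, if q satisfies M ⊆ M + q then q' satisfies M ⊆ M + q' for every q' ≥ λ₁ + ℓ, where λ is the partition corresponding to M with length ℓ; that is, every q ≥ λ₁ + ℓ is a critical degree. -/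
/-- A Maya diagram: a subset of ℤ containing finitely many nonnegative
integers and excluding finitely many negative integers. -/
def IsMaya (M : Set ℤ) : Prop :=
  (M ∩ {m : ℤ | 0 ≤ m}).Finite ∧ ({m : ℤ | m < 0} \ M).Finite

/-- Translation of a Maya diagram. -/
def shift (M : Set ℤ) (n : ℤ) : Set ℤ := {z : ℤ | ∃ m ∈ M, z = m + n}

/-- The Maya diagram M_λ = {λ_i − i : i ≥ 1} of a partition λ. -/
def mayaOfPartition (lam : ℕ → ℕ) : Set ℤ :=
  {z : ℤ | ∃ i : ℕ, 1 ≤ i ∧ z = (lam i : ℤ) - (i : ℤ)}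

/-
The equivalence holds for every subset of ℤ: `m ∈ M + q` means `m - q ∈ M`. For the bound, every
element `λ_i - i` of `M_λ` is at most `λ₁ - 1`, while `M_λ` contains every integer below `-ℓ`
(these are the points `λ_j - j = -j`, `j > ℓ`); so `q ≥ λ₁ + ℓ` moves `M_λ` into itself, and this
is invariant under translation.
-/

theorem mem_shift_iff {S : Set ℤ} {n z : ℤ} : z ∈ shift S n ↔ z - n ∈ S :=
  ⟨fun ⟨m, hm, hz⟩ => by simpa [hz] using hm, fun h => ⟨z - n, h, by ring⟩⟩

theorem subset_shift_iff (S : Set ℤ) (q : ℤ) :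
    S ⊆ shift S q ↔ ¬∃ m k : ℤ, m ∈ S ∧ k ∉ S ∧ m - k = q := by
  constructor
  · rintro h ⟨m, k, hm, hk, rfl⟩
    exact hk (by simpa using mem_shift_iff.1 (h hm))
  · exact fun h m hm => mem_shift_iff.2 (by_contra fun hk => h ⟨m, m - q, hm, hk, by ring⟩)

theorem shift_subset_shift_shift {S : Set ℤ} {q : ℤ} (h : S ⊆ shift S q) (n : ℤ) :
    shift S n ⊆ shift (shift S n) q := fun z hz => by
  rw [mem_shift_iff] at hz
  simpa only [mem_shift_iff, sub_right_comm] using h hz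

section mayaOfPartition

variable {lam : ℕ → ℕ}

theorem le_of_mem_mayaOfPartition (hle : ∀ i, 1 ≤ i → lam i ≤ lam 1) {z : ℤ}
    (hz : z ∈ mayaOfPartition lam) : z ≤ lam 1 - 1 := by
  obtain ⟨i, hi, rfl⟩ := hz
  have := hle i hi
  omega

theorem mem_mayaOfPartition_of_lt {ℓ : ℕ} (hzero : ∀ i, ℓ < i → lam i = 0) {z : ℤ}
    (hz : z < -ℓ) : z ∈ mayaOfPartition lam :=
  ⟨z.natAbs, by omega, by rw [hzero _ (by omega)]; omega⟩

theorem mayaOfPartition_subset_shift {ℓ q : ℕ} (hle : ∀ i, 1 ≤ i → lam i ≤ lam 1)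
    (hzero : ∀ i, ℓ < i → lam i = 0) (hq : lam 1 + ℓ ≤ q) :
    mayaOfPartition lam ⊆ shift (mayaOfPartition lam) q := fun z hz => by
  have := le_of_mem_mayaOfPartition hle hz
  exact mem_shift_iff.2 (mem_mayaOfPartition_of_lt hzero (by omega))

end mayaOfPartition

theorem critical_degree_general (M : Set ℤ)
    (lam : ℕ → ℕ) (ℓ : ℕ) (n : ℤ)
    (hmono : ∀ i j : ℕ, 1 ≤ i → i ≤ j → lam j ≤ lam i)
    (hzero : ∀ i, ℓ < i → lam i = 0)
    (hMlam : M = shift (mayaOfPartition lam) n) :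
    (∀ q : ℕ, (M ⊆ shift M q ↔ ¬∃ m k : ℤ, m ∈ M ∧ k ∉ M ∧ m - k = q)) ∧
    (∀ q : ℕ, lam 1 + ℓ ≤ q → M ⊆ shift M q) := by
  refine ⟨fun q => subset_shift_iff M q, fun q hq => ?_⟩
  rw [hMlam]
  exact shift_subset_shift_shift
    (mayaOfPartition_subset_shift (fun i hi => hmono 1 i le_rfl hi) hzero hq) n

/-- For a Maya diagram M with associated partition λ of length ℓ (so that
M is a translate of M_λ): (i) M ⊆ M + q iff (ii) there is no pair m ∈ M,
k ∉ M with m − k = q; moreover every q ≥ λ₁ + ℓ is a critical degree,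
i.e. M ⊆ M + q. -/
theorem critical_degree (M : Set ℤ) (hM : IsMaya M)
    (lam : ℕ → ℕ) (ℓ : ℕ) (n : ℤ)
    (hmono : ∀ i j : ℕ, 1 ≤ i → i ≤ j → lam j ≤ lam i)
    (hpos : ∀ i, 1 ≤ i → i ≤ ℓ → 0 < lam i)
    (hzero : ∀ i, ℓ < i → lam i = 0)
    (hMlam : M = shift (mayaOfPartition lam) n) :
    (∀ q : ℕ, (M ⊆ shift M q ↔ ¬∃ m k : ℤ, m ∈ M ∧ k ∉ M ∧ m - k = q)) ∧
    (∀ q : ℕ, lam 1 + ℓ ≤ q → M ⊆ shift M q) :=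
  critical_degree_general M lam ℓ n hmono hzero hMlam
end
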